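/- arXiv:2001.07156 — 6 statements merged into one kernel-verified Lean document; each statement's English description precedes it below -/
import Mathlib

section
/- The union of any chain (under inclusion) of I-crowded topologies on X generates an I-crowded topology on X. -/
/-- The union of any chain of I-crowded topologies on X generates an
I-crowded topology on X. -/
theorem statement3 {X : Type} [Countable X] (I : Set (Set X))
    (hhered : ∀ A ∈ I, ∀ B : Set X, B ⊆ A → B ∈ I)
    (hproper : (Set.univ : Set X) ∉ I)
    (C : Set (TopologicalSpace X))
    (hchain : ∀ s ∈ C, ∀ t ∈ C,
      (∀ U : Set X, @IsOpen X s U → @IsOpen X t U) ∨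
      (∀ U : Set X, @IsOpen X t U → @IsOpen X s U))
    (hcrowded : ∀ s ∈ C, ∀ U : Set X, @IsOpen X s U → U ∈ I → U = ∅) :
    ∀ U : Set X,
      @IsOpen X (TopologicalSpace.generateFrom {V : Set X | ∃ s ∈ C, @IsOpen X s V}) U →
      U ∈ I → U = ∅ := by
  have key : ∀ U : Set X,
      TopologicalSpace.GenerateOpen {V : Set X | ∃ s ∈ C, @IsOpen X s V} U →
      ∀ x ∈ U, ∃ V : Set X, x ∈ V ∧ V ⊆ U ∧
        (V = Set.univ ∨ ∃ s ∈ C, @IsOpen X s V) := by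
    intro U hU
    induction hU with
    | basic U hU => exact fun x hx => ⟨U, hx, subset_rfl, Or.inr hU⟩
    | univ => exact fun x hx => ⟨Set.univ, trivial, subset_rfl, Or.inl rfl⟩
    | inter U₁ U₂ h₁ h₂ ih₁ ih₂ =>
      rintro x ⟨hx₁, hx₂⟩
      obtain ⟨V₁, hxV₁, hV₁U, hV₁⟩ := ih₁ x hx₁
      obtain ⟨V₂, hxV₂, hV₂U, hV₂⟩ := ih₂ x hx₂
      refine ⟨V₁ ∩ V₂, ⟨hxV₁, hxV₂⟩, Set.inter_subset_inter hV₁U hV₂U, ?_⟩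
      rcases hV₁ with rfl | ⟨s, hs, hVs⟩
      · rcases hV₂ with rfl | ⟨t, ht, hVt⟩
        · exact Or.inl (by simp)
        · exact Or.inr ⟨t, ht, by simpa using hVt⟩
      · rcases hV₂ with rfl | ⟨t, ht, hVt⟩
        · exact Or.inr ⟨s, hs, by simpa using hVs⟩
        · rcases hchain s hs t ht with h | h
          · exact Or.inr ⟨t, ht, @IsOpen.inter X t _ _ (h V₁ hVs) hVt⟩
          · exact Or.inr ⟨s, hs, @IsOpen.inter X s _ _ hVs (h V₂ hVt)⟩
    | sUnion S hS ih =>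
      rintro x ⟨W, hW, hxW⟩
      obtain ⟨V, hxV, hVW, hV⟩ := ih W hW x hxW
      exact ⟨V, hxV, hVW.trans (Set.subset_sUnion_of_mem hW), hV⟩
  intro U hU hUI
  by_contra hne
  obtain ⟨x, hx⟩ := Set.nonempty_iff_ne_empty.mpr hne
  obtain ⟨V, hxV, hVU, hV⟩ := key U hU x hx
  have hVI : V ∈ I := hhered U hUI V hVU
  rcases hV with rfl | ⟨s, hs, hVs⟩
  · exact hproper hVI
  · have := hcrowded s hs V hVs hVI
    rw [this] at hxV
    exact hxV
end

section
/- Assuming Martin's Axiom for countable posets: if I is a hereditarily meager ideal on a countable set X, τ is an I-crowded topology on X with weight less than the continuum, and A ⊆ X is (I,τ)-crowded, then A can be partitioned into countably many pieces, each of which is (I,τ)-crowded and τ-dense in A. -/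
/-- A set D is dense (downwards) in a poset P. -/
def DenseBelow {P : Type} [Preorder P] (D : Set P) : Prop :=
  ∀ p : P, ∃ q ∈ D, q ≤ p

/-- G is a filter on the poset P. -/
def IsPosetFilter {P : Type} [Preorder P] (G : Set P) : Prop :=
  G.Nonempty ∧ (∀ p ∈ G, ∀ q : P, p ≤ q → q ∈ G) ∧
    ∀ p ∈ G, ∀ q ∈ G, ∃ r ∈ G, r ≤ p ∧ r ≤ q

/-- Martin's Axiom for countable posets: for any countable poset and fewer than
continuum many dense sets there is a filter meeting all of them. -/
def MACtble : Prop :=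
  ∀ (P : Type) [Preorder P] [Countable P] (𝒟 : Set (Set P)),
    Cardinal.mk 𝒟 < Cardinal.continuum → (∀ D ∈ 𝒟, DenseBelow D) →
    ∃ G : Set P, IsPosetFilter G ∧ ∀ D ∈ 𝒟, (G ∩ D).Nonempty

/-- An ideal I on X is hereditarily meager: its restriction to any I-positive set A
is meager in the Cantor space 2^A. -/
def HerMeager {X : Type} (I : Set (Set X)) : Prop :=
  ∀ A : Set X, A ∉ I →
    IsMeagre {f : A → Bool | {x : X | ∃ h : x ∈ A, f ⟨x, h⟩ = true} ∈ I}

/-- The weight of a topology: the least cardinality of a base. -/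
noncomputable def tweight {X : Type} (t : TopologicalSpace X) : Cardinal :=
  ⨅ B : {B : Set (Set X) // @TopologicalSpace.IsTopologicalBasis X t B}, Cardinal.mk ↥B.1

section AuxStatement6
open Set

lemma seq_of_meagre {α : Type*} [TopologicalSpace α] {s : Set α} (h : IsMeagre s) :
    ∃ O : ℕ → Set α, (∀ n, IsOpen (O n)) ∧ (∀ n, Dense (O n)) ∧ (⋂ n, O n) ⊆ sᶜ := by
  rw [IsMeagre, mem_residual_iff] at h
  obtain ⟨S, hSo, hSd, hSc, hSsub⟩ := h
  obtain ⟨f, hf⟩ := (hSc.insert univ).exists_eq_range (insert_nonempty _ _)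
  refine ⟨f, ?_, ?_, ?_⟩
  · intro n
    have hn : f n ∈ insert univ S := hf ▸ mem_range_self n
    rcases hn with hn | hn
    · rw [hn]; exact isOpen_univ
    · exact hSo _ hn
  · intro n
    have hn : f n ∈ insert univ S := hf ▸ mem_range_self n
    rcases hn with hn | hn
    · rw [hn]; exact dense_univ
    · exact hSd _ hn
  · intro x hx
    apply hSsub
    intro u hu
    have : u ∈ range f := by rw [← hf]; exact mem_insert_of_mem _ hu
    obtain ⟨n, rfl⟩ := this
    exact mem_iInter.1 hx n

lemma pi_open_nbhd {ι : Type*} {O : Set (ι → Bool)} (hO : IsOpen O) {f : ι → Bool} (hf : f ∈ O) :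
    ∃ F : Finset ι, {g : ι → Bool | ∀ i ∈ F, g i = f i} ⊆ O := by
  have h : O ∈ nhds f := hO.mem_nhds hf
  rw [nhds_pi, Filter.mem_pi] at h
  obtain ⟨I, hIfin, u, hu, hsub⟩ := h
  refine ⟨hIfin.toFinset, fun g hg => hsub (Set.mem_pi.2 fun i hi => ?_)⟩
  rw [hg i (hIfin.mem_toFinset.2 hi)]
  exact mem_of_mem_nhds (hu i)

def PCond (X : Type) : Type := {s : Finset (X × ℕ) // ∀ x a b, (x, a) ∈ s → (x, b) ∈ s → a = b}

instance {X : Type} : Preorder (PCond X) where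
  le p q := q.1 ⊆ p.1
  le_refl p := Finset.Subset.refl _
  le_trans p q r h1 h2 := Finset.Subset.trans h2 h1

instance {X : Type} [Countable X] : Countable (PCond X) := by
  unfold PCond; infer_instance

lemma PCond.subset_of_le {X : Type} {p q : PCond X} (h : p ≤ q) : q.1 ⊆ p.1 := h

def Cyl {X : Type} (S : Set X) (m : ℕ) (p : PCond X) : Set (S → Bool) :=
  {f | ∀ (x : S) (n : ℕ), ((x : X), n) ∈ p.1 → f x = decide (n = m)}

lemma cyl_isOpen {X : Type} (S : Set X) (m : ℕ) (p : PCond X) : IsOpen (Cyl S m p) := by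
  have he : Cyl S m p =
      ⋂ q ∈ p.1, {f : S → Bool | ∀ h : q.1 ∈ S, f ⟨q.1, h⟩ = decide (q.2 = m)} := by
    ext f
    simp only [Cyl, mem_setOf_eq, mem_iInter]
    constructor
    · intro hf q hq h; exact hf ⟨q.1, h⟩ q.2 hq
    · intro hf x n hx; exact hf ((x : X), n) hx x.2
  rw [he]
  refine isOpen_biInter_finset fun q hq => ?_
  by_cases h : q.1 ∈ S
  · have : {f : S → Bool | ∀ h : q.1 ∈ S, f ⟨q.1, h⟩ = decide (q.2 = m)} =
        (fun f : S → Bool => f ⟨q.1, h⟩) ⁻¹' {decide (q.2 = m)} := by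
      ext f
      simp only [mem_setOf_eq, mem_preimage, mem_singleton_iff]
      exact ⟨fun hf => hf h, fun hf _ => hf⟩
    rw [this]
    exact (continuous_apply _).isOpen_preimage _ (isOpen_discrete _)
  · have : {f : S → Bool | ∀ h : q.1 ∈ S, f ⟨q.1, h⟩ = decide (q.2 = m)} = univ := by
      ext f; simp [h]
    rw [this]; exact isOpen_univ

end AuxStatement6

open Set

/-- under MA(ctble), any (I,τ)-crowded set A can be partitioned into
countably many (I,τ)-crowded pieces, each dense in A. -/
theorem statement6 (hMA : MACtble) {X : Type} [Countable X] (I : Set (Set X))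
    (hhered : ∀ A ∈ I, ∀ B : Set X, B ⊆ A → B ∈ I)
    (hunion : ∀ A ∈ I, ∀ B ∈ I, A ∪ B ∈ I)
    (hfree : ∀ A : Set X, A.Finite → A ∈ I)
    (hproper : (Set.univ : Set X) ∉ I)
    (hHM : HerMeager I)
    (t : TopologicalSpace X)
    (hIcrowded : ∀ U : Set X, @IsOpen X t U → U ∈ I → U = ∅)
    (hw : tweight t < Cardinal.continuum)
    (A : Set X)
    (hA : ∀ U : Set X, @IsOpen X t U → (A ∩ U).Nonempty → A ∩ U ∉ I) :
    ∃ Am : ℕ → Set X,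
      (⋃ m, Am m) = A ∧
      Pairwise (Function.onFun Disjoint Am) ∧
      (∀ m, ∀ U : Set X, @IsOpen X t U → (Am m ∩ U).Nonempty → Am m ∩ U ∉ I) ∧
      (∀ m, A ⊆ @closure X t (Am m)) := by
  classical
  letI : TopologicalSpace X := t
  -- Step 1: a small basis
  have hbasis : ∃ B : Set (Set X), TopologicalSpace.IsTopologicalBasis B ∧
      Cardinal.mk B < Cardinal.continuum := by
    by_contra hcon
    push_neg at hcon
    have hne : Nonempty {B : Set (Set X) // TopologicalSpace.IsTopologicalBasis B} :=
      ⟨⟨{U : Set X | IsOpen U}, TopologicalSpace.isTopologicalBasis_opens⟩⟩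
    have : Cardinal.continuum ≤ tweight t := le_ciInf fun B => hcon B.1 B.2
    exact absurd hw (not_lt.2 this)
  obtain ⟨B, hB, hBsmall⟩ := hbasis
  -- Step 2: positive basic sets and meager decompositions
  have hpos : ∀ V : {V : Set X // V ∈ B ∧ (A ∩ V).Nonempty}, A ∩ V.1 ∉ I :=
    fun V => hA V.1 (hB.isOpen V.2.1) V.2.2
  choose O hOo hOd hOs using fun V : {V : Set X // V ∈ B ∧ (A ∩ V).Nonempty} =>
    seq_of_meagre (hHM (A ∩ V.1) (hpos V))
  -- Step 3: dense sets
  set J := {V : Set X // V ∈ B ∧ (A ∩ V).Nonempty} with hJdef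
  set 𝒟 : Set (Set (PCond X)) :=
      (Set.range fun x : X => {p : PCond X | ∃ n, (x, n) ∈ p.1}) ∪
      (Set.range fun w : J × ℕ × ℕ =>
        {p : PCond X | Cyl (A ∩ w.1.1) w.2.1 p ⊆ O w.1 w.2.2}) with h𝒟def
  have hcard : Cardinal.mk 𝒟 < Cardinal.continuum := by
    have h1 : Cardinal.mk ↥(Set.range fun x : X => {p : PCond X | ∃ n, (x, n) ∈ p.1}) <
        Cardinal.continuum :=
      lt_of_le_of_lt (Cardinal.mk_range_le.trans Cardinal.mk_le_aleph0)
        Cardinal.aleph0_lt_continuum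
    have hJle : Cardinal.mk J ≤ Cardinal.mk B := by
      have hinj : Function.Injective (fun V : J => (⟨V.1, V.2.1⟩ : B)) := by
        intro a b h
        apply Subtype.ext
        simpa using h
      exact Cardinal.mk_le_of_injective hinj
    have hprod : Cardinal.mk (J × ℕ × ℕ) < Cardinal.continuum := by
      have he : Cardinal.mk (J × ℕ × ℕ) = Cardinal.mk J * (Cardinal.aleph0 * Cardinal.aleph0) := by
        simp [Cardinal.mk_prod, Cardinal.lift_id]
      rw [he]
      exact Cardinal.mul_lt_of_lt Cardinal.aleph0_le_continuum (hJle.trans_lt hBsmall)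
        (Cardinal.mul_lt_of_lt Cardinal.aleph0_le_continuum Cardinal.aleph0_lt_continuum
          Cardinal.aleph0_lt_continuum)
    have h2 : Cardinal.mk ↥(Set.range fun w : J × ℕ × ℕ =>
        {p : PCond X | Cyl (A ∩ w.1.1) w.2.1 p ⊆ O w.1 w.2.2}) < Cardinal.continuum :=
      Cardinal.mk_range_le.trans_lt hprod
    rw [h𝒟def]
    exact lt_of_le_of_lt (Cardinal.mk_union_le _ _)
      (Cardinal.add_lt_of_lt Cardinal.aleph0_le_continuum h1 h2)
  have hdense : ∀ D ∈ 𝒟, DenseBelow D := by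
    rw [h𝒟def]
    rintro D (⟨x, rfl⟩ | ⟨⟨V, m, k⟩, rfl⟩)
    · show DenseBelow {q : PCond X | ∃ n, (x, n) ∈ q.1}
      intro p
      by_cases h : ∃ n, (x, n) ∈ p.1
      · exact ⟨p, h, le_refl p⟩
      · push_neg at h
        refine ⟨⟨insert (x, 0) p.1, ?_⟩, ⟨0, Finset.mem_insert_self _ _⟩,
          Finset.subset_insert _ _⟩
        intro y a b ha hb
        rcases Finset.mem_insert.1 ha with ha | ha <;> rcases Finset.mem_insert.1 hb with hb | hb
        · rw [Prod.mk.injEq] at ha hb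
          exact ha.2.trans hb.2.symm
        · exfalso
          rw [Prod.mk.injEq] at ha
          exact h b (ha.1 ▸ hb)
        · exfalso
          rw [Prod.mk.injEq] at hb
          exact h a (hb.1 ▸ ha)
        · exact p.2 y a b ha hb
    · show DenseBelow {q : PCond X | Cyl (A ∩ V.1) m q ⊆ O V k}
      intro p
      have hf₀ : (fun x : ↥(A ∩ V.1) => decide (((x : X), m) ∈ p.1)) ∈ Cyl (A ∩ V.1) m p := by
        intro x n hxn
        by_cases h : n = m
        · subst h; simp [hxn]
        · have hnm : ((x : X), m) ∉ p.1 := fun hm => h (p.2 _ n m hxn hm)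
          simp [h, hnm]
      obtain ⟨f, hfC, hfO⟩ := (hOd V k).inter_open_nonempty
        (Cyl (A ∩ V.1) m p) (cyl_isOpen (A ∩ V.1) m p) ⟨_, hf₀⟩
      obtain ⟨F, hF⟩ := pi_open_nbhd (hOo V k) hfO
      set N : Finset (X × ℕ) := (F.filter fun x : ↥(A ∩ V.1) => ∀ n, ((x : X), n) ∉ p.1).image
          (fun x : ↥(A ∩ V.1) => ((x : X), if f x then m else m + 1)) with hNdef
      have hfunc : ∀ y a b, (y, a) ∈ p.1 ∪ N → (y, b) ∈ p.1 ∪ N → a = b := by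
        intro y a b ha hb
        rcases Finset.mem_union.1 ha with ha | ha <;> rcases Finset.mem_union.1 hb with hb | hb
        · exact p.2 y a b ha hb
        · exfalso
          obtain ⟨x2, hx2, hx2e⟩ := Finset.mem_image.1 hb
          rw [Prod.mk.injEq] at hx2e
          exact (Finset.mem_filter.1 hx2).2 a (hx2e.1 ▸ ha)
        · exfalso
          obtain ⟨x1, hx1, hx1e⟩ := Finset.mem_image.1 ha
          rw [Prod.mk.injEq] at hx1e
          exact (Finset.mem_filter.1 hx1).2 b (hx1e.1 ▸ hb)
        · obtain ⟨x1, hx1, hx1e⟩ := Finset.mem_image.1 ha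
          obtain ⟨x2, hx2, hx2e⟩ := Finset.mem_image.1 hb
          rw [Prod.mk.injEq] at hx1e hx2e
          have hxx : x1 = x2 := Subtype.ext (hx1e.1.trans hx2e.1.symm)
          rw [← hx1e.2, ← hx2e.2, hxx]
      refine ⟨⟨p.1 ∪ N, hfunc⟩, ?_, ?_⟩
      · show Cyl (A ∩ V.1) m ⟨p.1 ∪ N, hfunc⟩ ⊆ O V k
        intro g hg
        apply hF
        intro i hiF
        by_cases hi : ∃ n, ((i : X), n) ∈ p.1
        · obtain ⟨n, hn⟩ := hi
          have h1 : g i = decide (n = m) := hg i n (Finset.mem_union_left _ hn)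
          have h2 : f i = decide (n = m) := hfC i n hn
          rw [h1, h2]
        · push_neg at hi
          have hmemN : ((i : X), if f i then m else m + 1) ∈ p.1 ∪ N :=
            Finset.mem_union_right _
              (Finset.mem_image.2 ⟨i, Finset.mem_filter.2 ⟨hiF, hi⟩, rfl⟩)
          have hgi := hg i _ hmemN
          cases hfi : f i
          · rw [hfi] at hgi
            simpa using hgi
          · rw [hfi] at hgi
            simpa using hgi
      · show p.1 ⊆ p.1 ∪ N
        exact Finset.subset_union_left
  obtain ⟨G, ⟨hGne, hGup, hGdir⟩, hGmeet⟩ := hMA (PCond X) 𝒟 hcard hdense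
  have huniq : ∀ x : X, ∀ a b : ℕ, ∀ p ∈ G, ∀ q ∈ G,
      (x, a) ∈ p.1 → (x, b) ∈ q.1 → a = b := by
    intro x a b p hp q hq hxa hxb
    obtain ⟨r, hr, hrp, hrq⟩ := hGdir p hp q hq
    exact r.2 x a b (PCond.subset_of_le hrp hxa) (PCond.subset_of_le hrq hxb)
  set Am : ℕ → Set X := fun m => {x | x ∈ A ∧ ∃ p ∈ G, (x, m) ∈ p.1} with hAmdef
  -- key claim
  have key : ∀ m : ℕ, ∀ V : J, Am m ∩ V.1 ∉ I := by
    intro m V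
    have hχ : ∀ k, (fun x : ↥(A ∩ V.1) => decide ((x : X) ∈ Am m)) ∈ O V k := by
      intro k
      obtain ⟨p, hpG, hpD⟩ := hGmeet _
        (Set.mem_union_right _ (Set.mem_range_self (⟨V, m, k⟩ : J × ℕ × ℕ)))
      apply hpD
      intro x n hxn
      by_cases h : n = m
      · have hx : (x : X) ∈ Am m := ⟨x.2.1, p, hpG, h ▸ hxn⟩
        simp [hx, h]
      · have hx : (x : X) ∉ Am m := by
          rintro ⟨-, q, hq, hxq⟩
          exact h (huniq x n m p hpG q hq hxn hxq)
        simp [h, hx]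
    have hmem := hOs V (mem_iInter.2 hχ)
    have heq : {x : X | ∃ h : x ∈ A ∩ V.1, decide (x ∈ Am m) = true} = Am m ∩ V.1 := by
      ext x
      simp only [mem_setOf_eq, decide_eq_true_eq, mem_inter_iff]
      constructor
      · rintro ⟨⟨hxA, hxV⟩, hxm⟩
        exact ⟨hxm, hxV⟩
      · rintro ⟨hxm, hxV⟩
        exact ⟨⟨hxm.1, hxV⟩, hxm⟩
    intro hI
    apply hmem
    show {x : X | ∃ h : x ∈ A ∩ V.1, decide (x ∈ Am m) = true} ∈ I
    rw [heq]
    exact hI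
  have keyne : ∀ m : ℕ, ∀ V : J, (Am m ∩ V.1).Nonempty := by
    intro m V
    rw [Set.nonempty_iff_ne_empty]
    intro h
    exact key m V (h ▸ hfree ∅ finite_empty)
  refine ⟨Am, ?_, ?_, ?_, ?_⟩
  · -- union
    ext x
    simp only [mem_iUnion]
    constructor
    · rintro ⟨m, hm, -⟩; exact hm
    · intro hx
      obtain ⟨p, hpG, n, hn⟩ := hGmeet _ (Set.mem_union_left _ (Set.mem_range_self x))
      exact ⟨n, hx, p, hpG, hn⟩
  · -- disjoint
    intro m m' hmm'
    simp only [Function.onFun]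
    rw [Set.disjoint_left]
    rintro x ⟨-, p, hp, hxp⟩ ⟨-, q, hq, hxq⟩
    exact hmm' (huniq x m m' p hp q hq hxp hxq)
  · -- crowded
    intro m U hU hne hmem
    obtain ⟨x, hxAm, hxU⟩ := hne
    obtain ⟨V, hVB, hxV, hVU⟩ := hB.exists_subset_of_mem_open hxU hU
    have hAV : (A ∩ V).Nonempty := ⟨x, hxAm.1, hxV⟩
    refine key m ⟨V, hVB, hAV⟩ ?_
    exact hhered _ hmem _ (Set.inter_subset_inter_right _ hVU)
  · -- dense
    intro m x hxA
    rw [mem_closure_iff]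
    intro o ho hxo
    obtain ⟨V, hVB, hxV, hVo⟩ := hB.exists_subset_of_mem_open hxo ho
    obtain ⟨y, hy1, hy2⟩ := keyne m ⟨V, hVB, ⟨x, hxA, hxV⟩⟩
    exact ⟨y, hVo hy2, hy1⟩
end

section
/- Under MA for countable posets, every crowded countable topological space of π-weight less than the continuum is selectively separable. -/
/-- A π-base for a topological space. -/
def IsPiBase {X : Type} (t : TopologicalSpace X) (B : Set (Set X)) : Prop :=
  (∀ U ∈ B, @IsOpen X t U ∧ U.Nonempty) ∧
  ∀ V : Set X, @IsOpen X t V → V.Nonempty → ∃ U ∈ B, U ⊆ V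

/-- The π-weight: least cardinality of a π-base. -/
noncomputable def piweight {X : Type} (t : TopologicalSpace X) : Cardinal :=
  ⨅ B : {B : Set (Set X) // IsPiBase t B}, Cardinal.mk ↥B.1

/-- Selective separability. -/
def SelectivelySeparable (X : Type) [TopologicalSpace X] : Prop :=
  ∀ D : ℕ → Set X, (∀ n, Dense (D n)) →
    ∃ F : ℕ → Set X, (∀ n, F n ⊆ D n ∧ (F n).Finite) ∧ Dense (⋃ n, F n)

/-! Force with finite sequences `F₀, …, Fₙ₋₁` of finite sets, `Fₖ ⊆ Dₖ`, ordered by extension: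
a countable poset. Since every `Dₙ` is dense, the conditions one of whose entries meets a given
nonempty open `U` are dense below. Applying MA to these dense sets for the fewer than `𝔠` members
of a π-base yields a filter, whose conditions agree on common entries; the sequence they define
meets every member of the π-base, so its union is dense. -/

theorem isPiBase_open_nonempty {X : Type} (t : TopologicalSpace X) :
    IsPiBase t {U | IsOpen U ∧ U.Nonempty} :=
  ⟨fun _ hU => hU, fun V hV hVne => ⟨V, ⟨hV, hVne⟩, subset_rfl⟩⟩

theorem exists_isPiBase_mk_lt_of_piweight_lt {X : Type} {t : TopologicalSpace X} {κ : Cardinal}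
    (h : piweight t < κ) : ∃ B, IsPiBase t B ∧ Cardinal.mk B < κ := by
  have : Nonempty {B : Set (Set X) // IsPiBase t B} := ⟨⟨_, isPiBase_open_nonempty t⟩⟩
  obtain ⟨⟨B, hB⟩, hlt⟩ := exists_lt_of_ciInf_lt h
  exact ⟨B, hB, hlt⟩

theorem IsPiBase.dense_of_forall_inter_nonempty {X : Type} [t : TopologicalSpace X]
    {B : Set (Set X)} (hB : IsPiBase t B) {S : Set X} (hS : ∀ U ∈ B, (U ∩ S).Nonempty) :
    Dense S := by
  refine dense_iff_inter_open.2 fun V hV hVne => ?_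
  obtain ⟨U, hU, hUV⟩ := hB.2 V hV hVne
  exact (hS U hU).mono (Set.inter_subset_inter_left S hUV)

section

variable {X : Type} (D : ℕ → Set X)

def FiniteSelection : Type :=
  {l : List (Finset X) // ∀ k (h : k < l.length), (l[k] : Set X) ⊆ D k}

namespace FiniteSelection

variable {D}

instance : Preorder (FiniteSelection D) where
  le p q := q.1 <+: p.1
  le_refl p := List.prefix_refl _
  le_trans _ _ _ hpq hqr := hqr.trans hpq

instance [Countable X] : Countable (FiniteSelection D) := by
  unfold FiniteSelection; infer_instance

def snoc (p : FiniteSelection D) (x : X) (hx : x ∈ D p.1.length) : FiniteSelection D :=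
  ⟨p.1 ++ [{x}], fun k hk => by
    rcases lt_or_eq_of_le (Nat.le_of_lt_succ (by simpa using hk)) with hk' | rfl
    · rw [List.getElem_append_left hk']
      exact p.2 k hk'
    · simpa using hx⟩

theorem snoc_le (p : FiniteSelection D) (x : X) (hx : x ∈ D p.1.length) : p.snoc x hx ≤ p :=
  List.prefix_append _ _

variable (D) in
def Meets (U : Set X) : Set (FiniteSelection D) :=
  {p | ∃ k, ∃ h : k < p.1.length, ((p.1[k] : Set X) ∩ U).Nonempty}

theorem denseBelow_meets [TopologicalSpace X] (hD : ∀ n, Dense (D n)) {U : Set X}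
    (hU : IsOpen U) (hUne : U.Nonempty) : DenseBelow (Meets D U) := by
  intro p
  obtain ⟨x, hxD, hxU⟩ := (hD p.1.length).exists_mem_open hU hUne
  exact ⟨p.snoc x hxD, ⟨p.1.length, by simp [snoc], x, by simp [snoc], hxU⟩, p.snoc_le x hxD⟩

def limit (G : Set (FiniteSelection D)) (k : ℕ) : Set X :=
  {x | ∃ p ∈ G, ∃ h : k < p.1.length, x ∈ p.1[k]}

theorem limit_subset (G : Set (FiniteSelection D)) (k : ℕ) : limit G k ⊆ D k := by
  rintro x ⟨p, -, h, hx⟩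
  exact p.2 k h hx

theorem getElem_eq_of_directedOn {G : Set (FiniteSelection D)} (hG : DirectedOn (· ≥ ·) G)
    {p q : FiniteSelection D} (hp : p ∈ G) (hq : q ∈ G) {k : ℕ} (hkp : k < p.1.length)
    (hkq : k < q.1.length) : p.1[k] = q.1[k] := by
  obtain ⟨r, -, hpr, hqr⟩ := hG p hp q hq
  have hpr : p.1 <+: r.1 := hpr
  have hqr : q.1 <+: r.1 := hqr
  rw [hpr.getElem hkp, hqr.getElem hkq]

theorem limit_finite {G : Set (FiniteSelection D)} (hG : DirectedOn (· ≥ ·) G) (k : ℕ) :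
    (limit G k).Finite := by
  by_cases hk : ∃ p ∈ G, k < p.1.length
  · obtain ⟨p, hp, hkp⟩ := hk
    refine (p.1[k]).finite_toSet.subset ?_
    rintro x ⟨q, hq, hkq, hx⟩
    rwa [getElem_eq_of_directedOn hG hp hq hkp hkq]
  · convert Set.finite_empty
    exact Set.eq_empty_of_forall_notMem fun _ ⟨p, hp, hkp, _⟩ => hk ⟨p, hp, hkp⟩

theorem inter_iUnion_limit_nonempty {G : Set (FiniteSelection D)} {U : Set X}
    (hG : (G ∩ Meets D U).Nonempty) : (U ∩ ⋃ k, limit G k).Nonempty := by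
  obtain ⟨p, hpG, k, hk, x, hx, hxU⟩ := hG
  exact ⟨x, hxU, Set.mem_iUnion.2 ⟨k, p, hpG, hk, hx⟩⟩

end FiniteSelection

end

open FiniteSelection in
theorem statement9_general (hMA : MACtble) (X : Type) [Countable X] [t : TopologicalSpace X]
    (hw : piweight t < Cardinal.continuum) :
    SelectivelySeparable X := by
  obtain ⟨B, hB, hBlt⟩ := exists_isPiBase_mk_lt_of_piweight_lt hw
  intro D hD
  obtain ⟨G, hG, hGmeets⟩ := hMA (FiniteSelection D) (Meets D '' B)
    (Cardinal.mk_image_le.trans_lt hBlt)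
    (by rintro _ ⟨U, hU, rfl⟩; exact denseBelow_meets hD (hB.1 U hU).1 (hB.1 U hU).2)
  refine ⟨limit G, fun k => ⟨limit_subset G k, limit_finite hG.2.2 k⟩, ?_⟩
  exact hB.dense_of_forall_inter_nonempty fun U hU =>
    inter_iUnion_limit_nonempty (hGmeets _ ⟨U, hU, rfl⟩)

/-- under MA(ctble), every crowded countable space of π-weight less
than the continuum is selectively separable. -/
theorem statement9 (hMA : MACtble) (X : Type) [Countable X] [t : TopologicalSpace X]
    (hcrowded : ∀ x : X, ¬ IsOpen ({x} : Set X))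
    (hw : piweight t < Cardinal.continuum) :
    SelectivelySeparable X :=
  statement9_general hMA X (t := t) hw
end

section
/- Assuming MA for countable posets: if I is a hereditarily meager q⁺ ideal on a countable set X, τ is an I-crowded topology on X of weight less than the continuum, and ⟨F_i : i ∈ ω⟩ is a sequence of pairwise disjoint finite subsets of X whose union is (I,τ)-crowded, then there exists an (I,τ)-crowded set S ⊆ ⋃_i F_i with |S ∩ F_i| ≤ 1 for each i and with closure of S equal to the closure of ⋃_i F_i. -/
/-- An ideal is q⁺: every I-positive set partitioned into finite pieces admits an
I-positive partial selector. -/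
def Qplus {X : Type} (I : Set (Set X)) : Prop :=
  ∀ A : Set X, A ∉ I → ∀ F : ℕ → Set X,
    (∀ n, (F n).Finite) → Pairwise (Function.onFun Disjoint F) → (⋃ n, F n) = A →
    ∃ S : Set X, S ⊆ A ∧ S ∉ I ∧ ∀ n, (S ∩ F n).Subsingleton

open Classical in
structure SelCond {X : Type} (A : Set X) (F : ℕ → Set X) : Type where
  s : Finset X
  a : Finset X
  hsA : ∀ x ∈ s, x ∈ A
  hsel : ∀ i, ((s : Set X) ∩ F i).Subsingleton
  hdisjsa : ∀ x ∈ s, x ∉ a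

instance {X : Type} (A : Set X) (F : ℕ → Set X) : Preorder (SelCond A F) where
  le p q := q.s ⊆ p.s ∧ q.a ⊆ p.a
  le_refl p := ⟨subset_rfl, subset_rfl⟩
  le_trans p q r h1 h2 := ⟨h2.1.trans h1.1, h2.2.trans h1.2⟩

instance {X : Type} [Countable X] (A : Set X) (F : ℕ → Set X) : Countable (SelCond A F) :=
  Function.Injective.countable (f := fun p : SelCond A F => (p.s, p.a)) (by
    rintro ⟨s1, a1, _, _, _⟩ ⟨s2, a2, _, _, _⟩ h
    simp only [Prod.mk.injEq] at h
    simp [h.1, h.2])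

lemma meagre_exists_denseOpen {Y : Type} [TopologicalSpace Y] {M : Set Y} (h : IsMeagre M) :
    ∃ W : ℕ → Set Y, (∀ k, IsOpen (W k) ∧ Dense (W k)) ∧ (⋂ k, W k) ⊆ Mᶜ := by
  rcases mem_residual_iff.mp h with ⟨S, hSo, hSd, hSc, hSs⟩
  have hc : (insert (Set.univ : Set Y) S).Countable := hSc.insert _
  obtain ⟨e, he⟩ := hc.exists_eq_range (Set.insert_nonempty _ _)
  refine ⟨e, fun k => ?_, ?_⟩
  · have : e k ∈ insert (Set.univ : Set Y) S := he ▸ Set.mem_range_self k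
    rcases this with h' | h'
    · simp [h', dense_univ]
    · exact ⟨hSo _ h', hSd _ h'⟩
  · refine Set.Subset.trans ?_ hSs
    intro f hf V hV
    have : V ∈ insert (Set.univ : Set Y) S := Set.mem_insert_of_mem _ hV
    rw [he] at this
    rcases this with ⟨k, rfl⟩
    exact Set.mem_iInter.mp hf k

lemma dense_open_pi {ι : Type} [DecidableEq ι] {W : Set (ι → Bool)} (ho : IsOpen W)
    (hd : Dense W) (B₀ : Finset ι) (f₀ : ι → Bool) :
    ∃ (E : Finset ι) (g : ι → Bool), B₀ ⊆ E ∧ (∀ x ∈ B₀, g x = f₀ x) ∧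
      ∀ f : ι → Bool, (∀ x ∈ E, f x = g x) → f ∈ W := by
  have hbox : IsOpen ((B₀ : Set ι).pi fun x => ({f₀ x} : Set Bool)) :=
    isOpen_set_pi B₀.finite_toSet fun a _ => isOpen_discrete _
  have hne : ((B₀ : Set ι).pi fun x => ({f₀ x} : Set Bool)).Nonempty :=
    ⟨f₀, fun x _ => rfl⟩
  obtain ⟨g, hgbox, hgW⟩ := hd.inter_open_nonempty _ hbox hne
  obtain ⟨E₁, u, hu, hsub⟩ := isOpen_pi_iff.mp ho g hgW
  refine ⟨B₀ ∪ E₁, g, Finset.subset_union_left, fun x hx => hgbox x hx, fun f hf => ?_⟩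
  apply hsub
  intro x hx
  rw [hf x (Finset.mem_union_right _ hx)]
  exact (hu x hx).2

/-- under MA(ctble), for a HM q⁺ ideal I and an I-crowded topology τ of
weight < 𝔠, every sequence of pairwise disjoint finite sets with (I,τ)-crowded union
admits an (I,τ)-crowded partial selector with the same closure as the union. -/
theorem statement10 (hMA : MACtble) {X : Type} [Countable X] (I : Set (Set X))
    (hhered : ∀ A ∈ I, ∀ B : Set X, B ⊆ A → B ∈ I)
    (hunion : ∀ A ∈ I, ∀ B ∈ I, A ∪ B ∈ I)
    (hfree : ∀ A : Set X, A.Finite → A ∈ I)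
    (hproper : (Set.univ : Set X) ∉ I)
    (hHM : HerMeager I) (hQ : Qplus I)
    (t : TopologicalSpace X)
    (hIcrowded : ∀ U : Set X, @IsOpen X t U → U ∈ I → U = ∅)
    (hw : tweight t < Cardinal.continuum)
    (F : ℕ → Set X)
    (hfin : ∀ i, (F i).Finite)
    (hdisj : Pairwise (Function.onFun Disjoint F))
    (hcrowded : ∀ U : Set X, @IsOpen X t U → ((⋃ i, F i) ∩ U).Nonempty →
      (⋃ i, F i) ∩ U ∉ I) :
    ∃ S : Set X,
      S ⊆ ⋃ i, F i ∧
      (∀ U : Set X, @IsOpen X t U → (S ∩ U).Nonempty → S ∩ U ∉ I) ∧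
      (∀ i, (S ∩ F i).Subsingleton) ∧
      @closure X t S = @closure X t (⋃ i, F i) := by
  classical
  letI : TopologicalSpace X := t
  set A : Set X := ⋃ i, F i with hA
  -- a basis of size < continuum
  obtain ⟨B, hB, hBcard⟩ :
      ∃ B : Set (Set X), TopologicalSpace.IsTopologicalBasis B ∧
        Cardinal.mk ↥B < Cardinal.continuum := by
    by_contra h
    push_neg at h
    have hne : Nonempty {B : Set (Set X) // @TopologicalSpace.IsTopologicalBasis X t B} :=
      ⟨⟨{U : Set X | IsOpen U}, TopologicalSpace.isTopologicalBasis_opens⟩⟩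
    exact absurd hw (not_lt.mpr (le_ciInf fun b => h b.1 b.2))
  -- the set of indices containing a point
  have hsubsing : ∀ y : X, ({i : ℕ | y ∈ F i}).Subsingleton := by
    intro y i hi j hj
    by_contra hne
    exact Set.disjoint_left.mp (hdisj hne) hi hj
  -- the blocked set of a condition
  set blk : SelCond A F → Set X :=
    fun p => (↑p.a : Set X) ∪ ⋃ y ∈ (p.s : Set X), ⋃ i ∈ {i : ℕ | y ∈ F i}, F i with hblk
  have hblkfin : ∀ p, (blk p).Finite := fun p =>
    (p.a.finite_toSet).union ((p.s.finite_toSet).biUnion fun y _ =>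
      ((hsubsing y).finite).biUnion fun i _ => hfin i)
  have hblkmem : ∀ (p : SelCond A F) (x y : X) (i : ℕ), y ∈ p.s → y ∈ F i → x ∈ F i →
      x ∈ blk p := by
    intro p x y i hy hyi hxi
    exact Or.inr (Set.mem_biUnion (Finset.mem_coe.mpr hy)
      (Set.mem_biUnion (show i ∈ {j : ℕ | y ∈ F j} from hyi) hxi))
  -- extension by a fresh point
  have hext : ∀ (p : SelCond A F) (x : X), x ∈ A → x ∉ blk p →
      ∃ q : SelCond A F, q ≤ p ∧ x ∈ q.s := by
    intro p x hxA hxb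
    have hxa : x ∉ p.a := fun h => hxb (Or.inl (Finset.mem_coe.mpr h))
    refine ⟨⟨insert x p.s, p.a, ?_, ?_, ?_⟩,
      ⟨Finset.subset_insert _ _, subset_rfl⟩, Finset.mem_insert_self _ _⟩
    · intro z hz
      rcases Finset.mem_insert.mp hz with rfl | hz
      · exact hxA
      · exact p.hsA z hz
    · intro i z hz w hw
      obtain ⟨hz1, hz2⟩ := hz
      obtain ⟨hw1, hw2⟩ := hw
      rw [Finset.coe_insert, Set.mem_insert_iff] at hz1 hw1
      rcases hz1 with rfl | hz1 <;> rcases hw1 with rfl | hw1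
      · rfl
      · exact absurd (hblkmem p z w i hw1 hw2 hz2) hxb
      · exact absurd (hblkmem p w z i hz1 hz2 hw2) hxb
      · exact p.hsel i ⟨hz1, hz2⟩ ⟨hw1, hw2⟩
    · intro z hz
      rcases Finset.mem_insert.mp hz with rfl | hz
      · exact hxa
      · exact p.hdisjsa z hz
  -- active basis sets
  set Act : Set (Set X) := {V | V ∈ B ∧ (A ∩ V).Nonempty} with hAct
  have key : ∀ V : ↥Act, ∃ T : Set X, T ⊆ A ∩ V.1 ∧ T ∉ I ∧ (∀ i, (T ∩ F i).Subsingleton) ∧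
      ∃ W : ℕ → Set (↥T → Bool), (∀ k, IsOpen (W k) ∧ Dense (W k)) ∧
        ∀ f : ↥T → Bool, (∀ k, f ∈ W k) →
          {x : X | ∃ h : x ∈ T, f ⟨x, h⟩ = true} ∉ I := by
    rintro ⟨V, hVB, hVne⟩
    have hC : A ∩ V ∉ I := hcrowded V (hB.isOpen hVB) hVne
    have hUeq : (⋃ i, F i ∩ (A ∩ V)) = A ∩ V := by
      rw [← Set.iUnion_inter, ← hA]
      exact Set.inter_eq_right.mpr Set.inter_subset_left
    obtain ⟨T, hT1, hT2, hT3⟩ := hQ (A ∩ V) hC (fun i => F i ∩ (A ∩ V))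
      (fun i => (hfin i).inter_of_left _)
      (fun i j hij => (hdisj hij).mono Set.inter_subset_left Set.inter_subset_left) hUeq
    have hTsel : ∀ i, (T ∩ F i).Subsingleton := by
      intro i x hx y hy
      exact hT3 i ⟨hx.1, hx.2, hT1 hx.1⟩ ⟨hy.1, hy.2, hT1 hy.1⟩
    obtain ⟨W, hW1, hW2⟩ := meagre_exists_denseOpen (hHM T hT2)
    refine ⟨T, hT1, hT2, hTsel, W, hW1, fun f hf => ?_⟩
    have hmem : f ∈ (⋂ k, W k) := Set.mem_iInter.mpr hf
    simpa using hW2 hmem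
  choose T hT1 hT2 hT3 W hW1 hW2 using key
  -- the dense sets
  set Dd : ↥Act → Set (SelCond A F) :=
    fun V => {p | ((p.s : Set X) ∩ V.1).Nonempty} with hDd
  set Dm : ↥Act × ℕ → Set (SelCond A F) :=
    fun z => {p | ∃ E : Finset ↥(T z.1), (∀ x ∈ E, (↑x ∈ p.s ∨ ↑x ∈ p.a)) ∧
      ∀ f : ↥(T z.1) → Bool, (∀ x ∈ E, (f x = true ↔ ↑x ∈ p.s)) → f ∈ W z.1 z.2} with hDm
  set 𝒟 : Set (Set (SelCond A F)) := Set.range Dd ∪ Set.range Dm with h𝒟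
  have hcard : Cardinal.mk ↥𝒟 < Cardinal.continuum := by
    have hActle : Cardinal.mk ↥Act ≤ Cardinal.mk ↥B :=
      Cardinal.mk_le_mk_of_subset (fun V hV => hV.1)
    have h1 : Cardinal.mk ↥(Set.range Dd) < Cardinal.continuum :=
      lt_of_le_of_lt (Cardinal.mk_range_le.trans hActle) hBcard
    have h2 : Cardinal.mk ↥(Set.range Dm) < Cardinal.continuum := by
      refine lt_of_le_of_lt Cardinal.mk_range_le ?_
      rw [Cardinal.mk_prod, Cardinal.lift_id, Cardinal.lift_id, Cardinal.mk_nat]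
      exact Cardinal.mul_lt_of_lt Cardinal.aleph0_le_continuum
        (lt_of_le_of_lt hActle hBcard) Cardinal.aleph0_lt_continuum
    exact lt_of_le_of_lt (Cardinal.mk_union_le _ _)
      (Cardinal.add_lt_of_lt Cardinal.aleph0_le_continuum h1 h2)
  have hdense : ∀ D ∈ 𝒟, DenseBelow D := by
    rintro D (⟨V, rfl⟩ | ⟨⟨V, k⟩, rfl⟩)
    · -- density of Dd V
      intro p
      have hpos : A ∩ V.1 ∉ I := hcrowded V.1 (hB.isOpen V.2.1) V.2.2
      have hns : ¬(A ∩ V.1 ⊆ blk p) := fun hsub => hpos (hfree _ ((hblkfin p).subset hsub))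
      obtain ⟨x, hx, hxb⟩ := Set.not_subset.mp hns
      obtain ⟨q, hqp, hxq⟩ := hext p x hx.1 hxb
      exact ⟨q, ⟨x, Finset.mem_coe.mpr hxq, hx.2⟩, hqp⟩
    · -- density of Dm (V, k)
      intro p
      have hB₀fin : (Subtype.val ⁻¹' (blk p ∪ ↑p.s) : Set ↥(T V)).Finite :=
        Set.Finite.preimage (Subtype.val_injective.injOn) ((hblkfin p).union p.s.finite_toSet)
      set B₀ : Finset ↥(T V) := hB₀fin.toFinset with hB₀
      set f₀ : ↥(T V) → Bool := fun z => decide ((z : X) ∈ p.s) with hf₀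
      obtain ⟨E, g, hB₀E, hg₀, hgW⟩ := dense_open_pi (hW1 V k).1 (hW1 V k).2 B₀ f₀
      have hmemB₀ : ∀ z : ↥(T V), ((z : X) ∈ blk p ∨ (z : X) ∈ p.s) → g z = f₀ z := by
        intro z hz
        apply hg₀
        rw [hB₀, Set.Finite.mem_toFinset]
        rcases hz with h | h
        · exact Or.inl h
        · exact Or.inr (Finset.mem_coe.mpr h)
      have hgs : ∀ z : ↥(T V), (z : X) ∈ p.s → g z = true := by
        intro z hz
        rw [hmemB₀ z (Or.inr hz), hf₀]
        simp [hz]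
      have hnew : ∀ z : ↥(T V), g z = true → (z : X) ∉ p.s → (z : X) ∉ blk p := by
        intro z hgz hzs hb
        have := hmemB₀ z (Or.inl hb)
        rw [hgz, hf₀] at this
        simp [hzs] at this
      set qs : Finset X := p.s ∪ (E.filter fun z => g z = true).image Subtype.val with hqs
      set qa : Finset X := p.a ∪ (E.filter fun z => g z = false).image Subtype.val with hqa
      have hqsA : ∀ x ∈ qs, x ∈ A := by
        intro x hx
        rcases Finset.mem_union.mp hx with hx | hx
        · exact p.hsA x hx
        · obtain ⟨z, _, rfl⟩ := Finset.mem_image.mp hx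
          exact (hT1 V z.2).1
      have hchar : ∀ x ∈ qs, x ∈ p.s ∨ (x ∈ T V ∧ x ∉ blk p) := by
        intro x hx
        rcases Finset.mem_union.mp hx with hx | hx
        · exact Or.inl hx
        · obtain ⟨z, hz, rfl⟩ := Finset.mem_image.mp hx
          rw [Finset.mem_filter] at hz
          by_cases h : (z : X) ∈ p.s
          · exact Or.inl h
          · exact Or.inr ⟨z.2, hnew z hz.2 h⟩
      have hqsel : ∀ i, ((qs : Set X) ∩ F i).Subsingleton := by
        intro i x hx y hy
        obtain ⟨hx1, hx2⟩ := hx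
        obtain ⟨hy1, hy2⟩ := hy
        rcases hchar x (Finset.mem_coe.mp hx1) with hx' | hx' <;>
          rcases hchar y (Finset.mem_coe.mp hy1) with hy' | hy'
        · exact p.hsel i ⟨Finset.mem_coe.mpr hx', hx2⟩ ⟨Finset.mem_coe.mpr hy', hy2⟩
        · exact absurd (hblkmem p y x i hx' hx2 hy2) hy'.2
        · exact absurd (hblkmem p x y i hy' hy2 hx2) hx'.2
        · exact hT3 V i ⟨hx'.1, hx2⟩ ⟨hy'.1, hy2⟩
      have hqdisj : ∀ x ∈ qs, x ∉ qa := by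
        intro x hx hxa
        rcases Finset.mem_union.mp hx with hx | hx <;>
          rcases Finset.mem_union.mp hxa with hxa | hxa
        · exact p.hdisjsa x hx hxa
        · obtain ⟨z, hz, rfl⟩ := Finset.mem_image.mp hxa
          rw [Finset.mem_filter] at hz
          have := hgs z hx
          rw [this] at hz
          exact absurd hz.2 (by simp)
        · obtain ⟨z, hz, rfl⟩ := Finset.mem_image.mp hx
          rw [Finset.mem_filter] at hz
          have hzs : (z : X) ∉ p.s := fun h => p.hdisjsa _ h hxa
          have := hmemB₀ z (Or.inl (Or.inl (Finset.mem_coe.mpr hxa)))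
          rw [hz.2, hf₀] at this
          simp [hzs] at this
        · obtain ⟨z, hz, hzx⟩ := Finset.mem_image.mp hx
          obtain ⟨w, hw, hwx⟩ := Finset.mem_image.mp hxa
          rw [Finset.mem_filter] at hz hw
          have hzw : z = w := Subtype.val_injective (hzx.trans hwx.symm)
          rw [hzw] at hz
          rw [hz.2] at hw
          exact absurd hw.2 (by simp)
      refine ⟨⟨qs, qa, hqsA, hqsel, hqdisj⟩, ⟨E, ?_, ?_⟩,
        ⟨Finset.subset_union_left, Finset.subset_union_left⟩⟩
      · intro x hx
        cases hb : g x with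
        | true => exact Or.inl (Finset.mem_union_right _
            (Finset.mem_image_of_mem _ (Finset.mem_filter.mpr ⟨hx, hb⟩)))
        | false => exact Or.inr (Finset.mem_union_right _
            (Finset.mem_image_of_mem _ (Finset.mem_filter.mpr ⟨hx, hb⟩)))
      · intro f hf
        apply hgW
        intro x hx
        cases hb : g x with
        | true =>
          exact (hf x hx).mpr (Finset.mem_union_right _
            (Finset.mem_image_of_mem _ (Finset.mem_filter.mpr ⟨hx, hb⟩)))
        | false =>
          by_contra hfx
          have hfx' : f x = true := by
            revert hfx; cases f x <;> simp
          have hxqs := (hf x hx).mp hfx'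
          rcases Finset.mem_union.mp hxqs with h | h
          · have := hgs x h
            rw [hb] at this
            exact absurd this (by simp)
          · obtain ⟨z, hz, hzx⟩ := Finset.mem_image.mp h
            rw [Finset.mem_filter] at hz
            have hzxeq : z = x := Subtype.val_injective hzx
            rw [hzxeq] at hz
            rw [hb] at hz
            exact absurd hz.2 (by simp)
  -- apply MA
  obtain ⟨G, ⟨hGne, hGup, hGdir⟩, hGmeet⟩ := hMA (SelCond A F) 𝒟 hcard hdense
  set S : Set X := {x | ∃ p ∈ G, x ∈ p.s} with hS
  have hSA : S ⊆ A := by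
    rintro x ⟨p, _, hx⟩
    exact p.hsA x hx
  have hSsel : ∀ i, (S ∩ F i).Subsingleton := by
    intro i x hx y hy
    obtain ⟨p, hp, hxp⟩ := hx.1
    obtain ⟨q, hq, hyq⟩ := hy.1
    obtain ⟨r, hr, hrp, hrq⟩ := hGdir p hp q hq
    exact r.hsel i ⟨Finset.mem_coe.mpr (hrp.1 hxp), hx.2⟩ ⟨Finset.mem_coe.mpr (hrq.1 hyq), hy.2⟩
  have hSavoid : ∀ p ∈ G, ∀ x ∈ p.a, x ∉ S := by
    rintro p hp x hx ⟨q, hq, hxq⟩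
    obtain ⟨r, hr, hrp, hrq⟩ := hGdir p hp q hq
    exact r.hdisjsa x (hrq.1 hxq) (hrp.2 hx)
  have hSV : ∀ V : ↥Act, (S ∩ V.1).Nonempty := by
    intro V
    obtain ⟨p, hpG, hpD⟩ := hGmeet (Dd V) (Or.inl ⟨V, rfl⟩)
    obtain ⟨x, hx1, hx2⟩ := hpD
    exact ⟨x, ⟨p, hpG, Finset.mem_coe.mp hx1⟩, hx2⟩
  have hST : ∀ V : ↥Act, S ∩ T V ∉ I := by
    intro V
    have hfW : ∀ k, (fun z : ↥(T V) => decide ((z : X) ∈ S)) ∈ W V k := by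
      intro k
      obtain ⟨p, hpG, E, hE1, hE2⟩ := hGmeet (Dm (V, k)) (Or.inr ⟨(V, k), rfl⟩)
      apply hE2
      intro x hx
      constructor
      · intro hfx
        have hxS : (x : X) ∈ S := of_decide_eq_true hfx
        rcases hE1 x hx with h | h
        · exact h
        · exact absurd hxS (hSavoid p hpG _ h)
      · intro h
        exact decide_eq_true ⟨p, hpG, h⟩
    have hnotI := hW2 V _ hfW
    have heq : {x : X | ∃ h : x ∈ T V,
        (fun z : ↥(T V) => decide ((z : X) ∈ S)) ⟨x, h⟩ = true} = S ∩ T V := by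
      ext x
      simp only [Set.mem_setOf_eq, Set.mem_inter_iff]
      constructor
      · rintro ⟨h, hx⟩
        exact ⟨of_decide_eq_true hx, h⟩
      · rintro ⟨h1, h2⟩
        exact ⟨h2, decide_eq_true h1⟩
    rwa [heq] at hnotI
  have hAcl : A ⊆ closure S := by
    intro x hx
    rw [mem_closure_iff]
    intro o ho hxo
    obtain ⟨V, hVB, hxV, hVo⟩ := hB.exists_subset_of_mem_open hxo ho
    obtain ⟨y, hyS, hyV⟩ := hSV ⟨V, hVB, ⟨x, hx, hxV⟩⟩
    exact ⟨y, hVo hyV, hyS⟩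
  have hcrowd : ∀ U : Set X, IsOpen U → (S ∩ U).Nonempty → S ∩ U ∉ I := by
    rintro U hU ⟨x, hxS, hxU⟩ hIU
    obtain ⟨V, hVB, hxV, hVU⟩ := hB.exists_subset_of_mem_open hxU hU
    have hVact : V ∈ Act := ⟨hVB, ⟨x, hSA hxS, hxV⟩⟩
    apply hST ⟨V, hVact⟩
    apply hhered _ hIU
    intro y hy
    exact ⟨hy.1, hVU (hT1 ⟨V, hVact⟩ hy.2).2⟩
  refine ⟨S, hSA, hcrowd, hSsel, ?_⟩
  apply subset_antisymm
  · exact closure_mono hSA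
  · exact closure_minimal hAcl isClosed_closure
end

section
/- Fix a partition of a countable set X into infinitely many infinite sets X_n, and let I be the collection of subsets of X whose intersection with all but finitely many X_n is finite. Then I is a proper free Borel ideal which is q⁺: for every A ∈ I⁺ and every partition of A into finite sets (F_k), there is S ⊆ A with S ∈ I⁺ and |S ∩ F_k| ≤ 1 for all k. -/
/-!
A set is positive for the ideal iff infinitely many of its traces `A ∩ Xp n` are infinite. If
such a set is cut into finite blocks, each infinite trace meets infinitely many blocks, so
walking through the pairs `(i, j)` one can pick a point of the `i`-th infinite trace in a block
not used before: the chosen points meet every block at most once and every trace infinitely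
often. Membership in the ideal is the `liminf` over `n` of "the trace on `Xp n` is finite",
each of which is a countable union of basic closed sets, hence Borel.
-/

open Filter Function Set

/-- The Fubini product `Fin ⊗ Fin`, with `Xp n` as the `n`-th column. -/
def finTensorFin {X : Type*} (Xp : ℕ → Set X) : Set (Set X) :=
  {A | {n | (A ∩ Xp n).Infinite}.Finite}

namespace finTensorFin

variable {X : Type*} {Xp : ℕ → Set X}

theorem mem_of_subset {A B : Set X} (hA : A ∈ finTensorFin Xp) (hBA : B ⊆ A) :
    B ∈ finTensorFin Xp :=
  hA.subset fun _ hn => hn.mono (inter_subset_inter_left _ hBA)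

theorem union_mem {A B : Set X} (hA : A ∈ finTensorFin Xp) (hB : B ∈ finTensorFin Xp) :
    A ∪ B ∈ finTensorFin Xp := by
  refine (hA.union hB).subset fun n hn => ?_
  by_contra hAB
  simp only [mem_union, mem_ofPred_eq, not_or, not_infinite] at hAB
  exact hn (union_inter_distrib_right A B (Xp n) ▸ hAB.1.union hAB.2)

theorem mem_of_finite {A : Set X} (hA : A.Finite) : A ∈ finTensorFin Xp := by
  simp [finTensorFin, hA.subset inter_subset_left]

theorem univ_notMem (hinf : ∀ n, (Xp n).Infinite) : univ ∉ finTensorFin Xp := by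
  simp [finTensorFin, hinf, Set.infinite_univ]

end finTensorFin

section Measurability

variable {X : Type*} [Countable X]

theorem measurableSet_setOf_finite_inter (S : Set X) :
    MeasurableSet {f : X → Bool | ({x | f x = true} ∩ S).Finite} := by
  have hunion : {f : X → Bool | ({x | f x = true} ∩ S).Finite} =
      ⋃ s : Finset X, ⋂ x ∈ S \ ↑s, {f | f x = false} := by
    ext f
    simp only [mem_iUnion, mem_iInter, Set.mem_sdiff]
    constructor
    · intro hfin
      refine ⟨hfin.toFinset, fun x ⟨hxS, hxs⟩ => ?_⟩
      by_contra hfx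
      exact hxs (hfin.mem_toFinset.mpr ⟨by simpa using hfx, hxS⟩)
    · rintro ⟨s, hs⟩
      refine s.finite_toSet.subset fun x ⟨hfx, hxS⟩ => ?_
      by_contra hxs
      exact Bool.false_ne_true ((hs x ⟨hxS, hxs⟩).symm.trans hfx)
  rw [hunion]
  exact .iUnion fun s => .biInter (to_countable _) fun x _ =>
    measurableSet_eq_fun (measurable_pi_apply x) measurable_const

theorem measurableSet_setOf_mem_finTensorFin (Xp : ℕ → Set X) :
    MeasurableSet {f : X → Bool | {x | f x = true} ∈ finTensorFin Xp} := by
  have hliminf : {f : X → Bool | {x | f x = true} ∈ finTensorFin Xp} =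
      liminf (fun n => {f : X → Bool | ({x | f x = true} ∩ Xp n).Finite}) atTop := by
    rw [← Nat.cofinite_eq_atTop, cofinite.liminf_set_eq]
    rfl
  rw [hliminf]
  exact .measurableSet_liminf fun n => measurableSet_setOf_finite_inter (Xp n)

end Measurability

theorem exists_partialSelector_forall_inter_infinite {X : Type*} {F : ℕ → Set X} (hF : ∀ k, (F k).Finite)
    (hFd : Pairwise (Disjoint on F)) {Y : ℕ → Set X} (hY : ∀ i, (Y i).Infinite)
    (hYF : ∀ i, Y i ⊆ ⋃ k, F k) :
    ∃ S : Set X, S ⊆ ⋃ i, Y i ∧ (∀ i, (S ∩ Y i).Infinite) ∧ ∀ k, (S ∩ F k).Subsingleton := by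
  have hblocks : ∀ i, {k | (Y i ∩ F k).Nonempty}.Infinite := by
    intro i hfin
    refine hY i ((hfin.biUnion fun k _ => hF k).subset fun x hx => ?_)
    obtain ⟨k, hk⟩ := mem_iUnion.mp (hYF i hx)
    exact mem_biUnion ⟨x, hx, hk⟩ hk
  obtain ⟨φ, hφ, hφY⟩ := extraction_forall_of_frequently fun m =>
    Nat.frequently_atTop_iff_infinite.mpr (hblocks (Nat.unpair m).1)
  choose s hsY hsF using hφY
  have hblock : ∀ m k, s m ∈ F k → k = φ m := fun m k hk =>
    hFd.eq (not_disjoint_iff.mpr ⟨s m, hk, hsF m⟩)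
  have hs : s.Injective := fun m m' h => hφ.injective (hblock m' _ (h ▸ hsF m))
  refine ⟨range s, range_subset_iff.mpr fun m => mem_iUnion_of_mem _ (hsY m), fun i => ?_, ?_⟩
  · refine infinite_of_injective_forall_mem (f := fun j => s (Nat.pair i j))
      (hs.comp fun j j' h => (Nat.pair_eq_pair.mp h).2) fun j => ⟨mem_range_self _, ?_⟩
    simpa using hsY (Nat.pair i j)
  · rintro k _ ⟨⟨m, rfl⟩, hm⟩ _ ⟨⟨m', rfl⟩, hm'⟩
    rw [hφ.injective ((hblock m k hm).symm.trans (hblock m' k hm'))]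

theorem statement16_general {X : Type} [Countable X] (Xp : ℕ → Set X)
    (hinf : ∀ n, (Xp n).Infinite)
    (I : Set (Set X))
    (hI : I = {A : Set X | {n : ℕ | (A ∩ Xp n).Infinite}.Finite}) :
    (∀ A ∈ I, ∀ B : Set X, B ⊆ A → B ∈ I) ∧
    (∀ A ∈ I, ∀ B ∈ I, A ∪ B ∈ I) ∧
    (∀ A : Set X, A.Finite → A ∈ I) ∧
    (Set.univ : Set X) ∉ I ∧
    @MeasurableSet (X → Bool) (borel (X → Bool)) {f : X → Bool | {x : X | f x = true} ∈ I} ∧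
    (∀ A : Set X, A ∉ I → ∀ F : ℕ → Set X,
      (∀ k, (F k).Finite) → Pairwise (Function.onFun Disjoint F) → (⋃ k, F k) = A →
      ∃ S : Set X, S ⊆ A ∧ S ∉ I ∧ ∀ k, (S ∩ F k).Subsingleton) := by
  change I = finTensorFin Xp at hI
  subst hI
  refine ⟨fun A hA B => finTensorFin.mem_of_subset hA, fun A hA B => finTensorFin.union_mem hA,
    fun A => finTensorFin.mem_of_finite, finTensorFin.univ_notMem hinf, ?_, ?_⟩
  · rw [← BorelSpace.measurable_eq]
    exact measurableSet_setOf_mem_finTensorFin Xp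
  · intro A hA F hF hFd hFA
    have ν : ℕ ↪ {n | (A ∩ Xp n).Infinite} := Set.Infinite.natEmbedding _ hA
    obtain ⟨S, hSA, hSY, hSF⟩ := exists_partialSelector_forall_inter_infinite hF hFd (Y := fun i => A ∩ Xp (ν i))
      (fun i => (ν i).2) fun i => inter_subset_left.trans hFA.superset
    refine ⟨S, hSA.trans (iUnion_subset fun i => inter_subset_left), fun hS => ?_, hSF⟩
    refine (infinite_range_of_injective (Subtype.val_injective.comp ν.injective)).mono ?_ hS
    rintro _ ⟨i, rfl⟩
    exact (hSY i).mono (inter_subset_inter_right _ inter_subset_right)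

/-- for a partition of X into infinitely many infinite sets X_n, the
collection I of sets meeting all but finitely many X_n in a finite set is a proper
free Borel ideal which is q⁺. -/
theorem statement16 {X : Type} [Countable X] (Xp : ℕ → Set X)
    (hinf : ∀ n, (Xp n).Infinite)
    (hdisj : Pairwise (Function.onFun Disjoint Xp))
    (hpart : (⋃ n, Xp n) = Set.univ)
    (I : Set (Set X))
    (hI : I = {A : Set X | {n : ℕ | (A ∩ Xp n).Infinite}.Finite}) :
    (∀ A ∈ I, ∀ B : Set X, B ⊆ A → B ∈ I) ∧
    (∀ A ∈ I, ∀ B ∈ I, A ∪ B ∈ I) ∧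
    (∀ A : Set X, A.Finite → A ∈ I) ∧
    (Set.univ : Set X) ∉ I ∧
    @MeasurableSet (X → Bool) (borel (X → Bool)) {f : X → Bool | {x : X | f x = true} ∈ I} ∧
    (∀ A : Set X, A ∉ I → ∀ F : ℕ → Set X,
      (∀ k, (F k).Finite) → Pairwise (Function.onFun Disjoint F) → (⋃ k, F k) = A →
      ∃ S : Set X, S ⊆ A ∧ S ∉ I ∧ ∀ k, (S ∩ F k).Subsingleton) :=
  statement16_general Xp hinf I hI
end

section
/- Let CL(2^ω) be the space of clopen subsets of the Cantor space, topologized as a subspace of 2^{2^ω}, and for each positive integer k let A_k be the set of k-adequated clopen sets. Let X = ⋃_{k∈ω} A_{k+1}. Then any set S ⊆ X with |S ∩ A_k| ≤ 1 for each k is closed in X; consequently X is not a q⁺ space. -/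
/-- The Cantor space 2^ω. -/
abbrev Cant : Type := ℕ → Bool

/-- Two sequences s, t ∈ 2^k are linked if they differ exactly in the last coordinate. -/
def Linked {k : ℕ} (s t : Fin k → Bool) : Prop :=
  s ≠ t ∧ ∀ i : Fin k, (i : ℕ) + 1 < k → s i = t i

/-- An element g of 2^(2^ω) (identified with the subset {α | g α = true} of the Cantor
space) is k-adequated: it is a union [s₁] ∪ ⋯ ∪ [s_m] of cylinders with all sᵢ ∈ 2^k
pairwise not linked. -/
def Adequated (k : ℕ) (g : Cant → Bool) : Prop :=
  ∃ T : Finset (Fin k → Bool), T.Nonempty ∧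
    (∀ s ∈ T, ∀ t ∈ T, s ≠ t → ¬ Linked s t) ∧
    ∀ α : Cant, g α = true ↔ ∃ s ∈ T, ∀ i : Fin k, α i = s i

/-- The set A_k of k-adequated clopen sets, inside 2^(2^ω). -/
def Ak (k : ℕ) : Set (Cant → Bool) := {g | Adequated k g}

/-- The space X = ⋃_k A_{k+1}, as a subspace of 2^(2^ω). -/
def Xad : Set (Cant → Bool) := ⋃ k : ℕ, Ak (k + 1)

/-!
A `(k+1)`-adequated set never contains both children of a node of length `k`. So if `S` meets
every `A_k` in at most one point and `x ∈ A_K \ S`, one builds a branch `α` through a cylinder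
inside `x` which, at every level `m ≥ K`, steps into the child omitted by the point of
`S ∩ A_{m+1}`. Every point of `S` of level `> K` omits `α` while `x` contains it, and the points
of `S` of level `≤ K` are finitely many, since each `A_j` is finite; this separates `x` from `S`.

For the failure of `q⁺` take `x = [0] = {γ | γ 0 = false}` and `F n = A_{n+1} \ {x}`. Given
finitely many points of `2^ω`, separated below some level `N ≥ 1`, the set of `δ ∈ [0]` whose
`N`-th bit is the one prescribed by those points is `(N+1)`-adequated and agrees with `[0]` on
them, so `x` lies in the closure of `⋃ F n`. A partial selector of the `F n` is a selector of
the `A_k`, hence closed, and does not contain `x`.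
-/

open Filter Set

theorem exists_seq_eq_of_prefix {β : Type*} (c : (n : ℕ) → (Fin n → β) → β) :
    ∃ α : ℕ → β, ∀ n, α n = c n fun i => α i :=
  ⟨fun n => Nat.strongRec (fun n ih => c n fun i => ih i i.isLt) n,
    fun n => Nat.strongRec_eq _ n⟩

theorem mem_closure_of_forall_finset {ι X : Type*} [TopologicalSpace X] [DiscreteTopology X]
    {x : ι → X} {s : Set (ι → X)} (h : ∀ I : Finset ι, ∃ y ∈ s, ∀ i ∈ I, y i = x i) :
    x ∈ closure s := by
  rw [mem_closure_iff_nhds]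
  intro t ht
  rw [nhds_pi, Filter.mem_pi'] at ht
  obtain ⟨I, u, hu, hIt⟩ := ht
  obtain ⟨y, hys, hy⟩ := h I
  refine ⟨y, hIt fun i hi => ?_, hys⟩
  rw [hy i hi]
  exact mem_of_mem_nhds (hu i)

theorem eventually_forall_eq_of_forall_lt_eq (I : Finset Cant) :
    ∀ᶠ N in atTop, ∀ γ ∈ I, ∀ γ' ∈ I, (∀ i < N, γ i = γ' i) → γ = γ' := by
  simp only [eventually_all_finset]
  intro γ _ γ' _
  by_cases h : γ = γ'
  · exact Eventually.of_forall fun _ _ => h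
  · obtain ⟨n, hn⟩ := Function.ne_iff.1 h
    filter_upwards [eventually_gt_atTop n] with N hN hagree using absurd (hagree n hN) hn

theorem bit_eq_of_mem_Ak_succ {N : ℕ} {g : Cant → Bool} (hg : g ∈ Ak (N + 1)) {δ δ' : Cant}
    (hagree : ∀ i < N, δ i = δ' i) (hδ : g δ = true) (hδ' : g δ' = true) : δ N = δ' N := by
  obtain ⟨T, -, hnl, hchar⟩ := hg
  obtain ⟨s, hs, hδs⟩ := (hchar δ).1 hδ
  obtain ⟨t, ht, hδ't⟩ := (hchar δ').1 hδ'
  by_cases hst : s = t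
  · subst hst
    exact (hδs (Fin.last N)).trans (hδ't (Fin.last N)).symm
  · refine absurd ⟨hst, fun i hi => ?_⟩ (hnl s hs t ht hst)
    rw [← hδs i, ← hδ't i]
    exact hagree i (by omega)

theorem mem_Ak_succ_of {N : ℕ} {g : Cant → Bool}
    (hdep : ∀ δ δ' : Cant, (∀ i ≤ N, δ i = δ' i) → g δ = g δ') (hne : ∃ δ, g δ = true)
    (hbit : ∀ δ δ' : Cant, (∀ i < N, δ i = δ' i) → g δ = true → g δ' = true → δ N = δ' N) :
    g ∈ Ak (N + 1) := by
  classical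
  refine ⟨Finset.univ.filter fun s => ∃ δ, g δ = true ∧ ∀ i : Fin (N + 1), δ i = s i,
    ?_, ?_, fun α => ?_⟩
  · obtain ⟨δ, hδ⟩ := hne
    exact ⟨fun i => δ i, Finset.mem_filter.2 ⟨Finset.mem_univ _, δ, hδ, fun _ => rfl⟩⟩
  · simp only [Finset.mem_filter, Finset.mem_univ, true_and]
    rintro s ⟨δ, hδ, hδs⟩ t ⟨δ', hδ', hδ't⟩ hst ⟨-, hlow⟩
    refine hst (funext fun i => Fin.lastCases ?_ (fun j => hlow j.castSucc (by simp)) i)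
    rw [← hδs, ← hδ't]
    refine hbit δ δ' (fun i hi => ?_) hδ hδ'
    rw [hδs ⟨i, by omega⟩, hδ't ⟨i, by omega⟩]
    exact hlow ⟨i, by omega⟩ (by simpa using hi)
  · simp only [Finset.mem_filter, Finset.mem_univ, true_and]
    refine ⟨fun hα => ⟨fun i => α i, ⟨α, hα, fun _ => rfl⟩, fun _ => rfl⟩, ?_⟩
    rintro ⟨s, ⟨δ, hδ, hδs⟩, hαs⟩
    rwa [hdep α δ fun i hi => (hαs ⟨i, by omega⟩).trans (hδs ⟨i, by omega⟩).symm]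

theorem exists_cylinder_subset_of_mem_Ak {K : ℕ} {g : Cant → Bool} (hg : g ∈ Ak K) :
    ∃ δ : Cant, ∀ α : Cant, (∀ i < K, α i = δ i) → g α = true := by
  obtain ⟨T, ⟨s, hs⟩, -, hchar⟩ := hg
  refine ⟨fun n => if h : n < K then s ⟨n, h⟩ else false,
    fun α hα => (hchar α).2 ⟨s, hs, fun i => (hα i i.isLt).trans (dif_pos i.isLt)⟩⟩

theorem notMem_Ak_of_lt {k j : ℕ} (hkj : k < j) {g : Cant → Bool} (hk : g ∈ Ak k) :
    g ∉ Ak j := by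
  obtain ⟨m, rfl⟩ : ∃ m, j = m + 1 := ⟨j - 1, by omega⟩
  intro hj
  obtain ⟨δ, hδ⟩ := exists_cylinder_subset_of_mem_Ak hk
  -- the cylinder of `δ` contains both children of `δ` restricted to `m ≥ k`
  have hflip := bit_eq_of_mem_Ak_succ hj (δ' := Function.update δ m (!δ m))
    (fun i hi => (Function.update_of_ne (by omega) _ _).symm) (hδ δ fun _ _ => rfl)
    (hδ _ fun i hi => Function.update_of_ne (by omega) _ _)
  simp at hflip

theorem eq_of_mem_Ak_of_mem_Ak {k j : ℕ} {g : Cant → Bool} (hk : g ∈ Ak k) (hj : g ∈ Ak j) :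
    k = j := by
  rcases lt_trichotomy k j with h | h | h
  · exact absurd hj (notMem_Ak_of_lt h hk)
  · exact h
  · exact absurd hk (notMem_Ak_of_lt h hj)

theorem Ak_finite (k : ℕ) : (Ak k).Finite := by
  classical
  refine (finite_range fun (T : Finset (Fin k → Bool)) (α : Cant) =>
    decide (∃ s ∈ T, ∀ i : Fin k, α i = s i)).subset ?_
  rintro g ⟨T, -, -, hchar⟩
  exact ⟨T, funext fun α => by rw [Bool.eq_iff_iff, decide_eq_true_iff, hchar]⟩

section Selector

variable {S : Set (Cant → Bool)}

theorem exists_bit_forall_eq_false {m : ℕ} (hS : (S ∩ Ak (m + 1)).Subsingleton)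
    (v : Fin m → Bool) :
    ∃ b : Bool, ∀ g ∈ S ∩ Ak (m + 1), ∀ β : Cant, (∀ i : Fin m, β i = v i) → β m = b →
      g β = false := by
  by_contra! h
  obtain ⟨g, hg, β₀, hβ₀v, hβ₀m, hβ₀⟩ := h false
  obtain ⟨g', hg', β₁, hβ₁v, hβ₁m, hβ₁⟩ := h true
  obtain rfl := hS hg hg'
  have := bit_eq_of_mem_Ak_succ hg.2 (fun i hi => (hβ₀v ⟨i, hi⟩).trans (hβ₁v ⟨i, hi⟩).symm)
    (by simpa using hβ₀) (by simpa using hβ₁)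
  simp_all

theorem exists_branch_avoiding_selector (hS : ∀ k, (S ∩ Ak k).Subsingleton) {x : Cant → Bool}
    {K : ℕ} (hx : x ∈ Ak K) :
    ∃ α : Cant, x α = true ∧ ∀ m ≥ K, ∀ g ∈ S ∩ Ak (m + 1), g α = false := by
  obtain ⟨δ, hδ⟩ := exists_cylinder_subset_of_mem_Ak hx
  choose b hb using fun m => exists_bit_forall_eq_false (hS (m + 1))
  obtain ⟨α, hα⟩ := exists_seq_eq_of_prefix fun n v => if n < K then δ n else b n v
  refine ⟨α, hδ α fun i hi => by rw [hα, if_pos hi], fun m hm g hg => ?_⟩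
  refine hb m _ g hg α (fun _ => rfl) ?_
  rw [hα, if_neg (by omega)]

theorem notMem_closure_of_selector (hSX : S ⊆ Xad) (hS : ∀ k, (S ∩ Ak k).Subsingleton)
    {x : Cant → Bool} {K : ℕ} (hx : x ∈ Ak K) (hxS : x ∉ S) : x ∉ closure S := by
  obtain ⟨α, hxα, hα⟩ := exists_branch_avoiding_selector hS hx
  have hC : IsClosed ({g | g α = false} ∪ (S ∩ ⋃ j ∈ Iic K, Ak j)) :=
    (isClosed_eq (continuous_apply α) continuous_const).union
      (((finite_Iic K).biUnion fun j _ => Ak_finite j).subset inter_subset_right).isClosed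
  have hSC : S ⊆ {g | g α = false} ∪ (S ∩ ⋃ j ∈ Iic K, Ak j) := by
    intro g hg
    obtain ⟨m, hm⟩ := mem_iUnion.1 (hSX hg)
    rcases le_or_gt K m with hKm | hmK
    · exact Or.inl (hα m hKm g ⟨hg, hm⟩)
    · exact Or.inr ⟨hg, mem_biUnion (mem_Iic.2 hmK) hm⟩
  intro hcl
  rcases hC.closure_subset_iff.2 hSC hcl with h | ⟨h, -⟩
  · simp [hxα] at h
  · exact hxS h

theorem isClosed_selector (hSX : S ⊆ Xad) (hS : ∀ k, (S ∩ Ak k).Subsingleton) :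
    IsClosed {p : Xad | (p : Cant → Bool) ∈ S} := by
  have : {p : Xad | (p : Cant → Bool) ∈ S} = Subtype.val ⁻¹' closure S := by
    refine Subset.antisymm (fun p hp => subset_closure hp) fun p hp => by_contra fun hpS => ?_
    obtain ⟨K, hK⟩ := mem_iUnion.1 p.2
    exact notMem_closure_of_selector hSX hS hK hpS hp
  rw [this]
  exact isClosed_closure.preimage continuous_subtype_val

end Selector

theorem subsingleton_image_inter_Ak {S : Set Xad} {F : ℕ → Set Xad}
    (hF : ∀ n, F n ⊆ Subtype.val ⁻¹' Ak (n + 1)) (hSF : S ⊆ ⋃ n, F n)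
    (hsel : ∀ n, (S ∩ F n).Subsingleton) (k : ℕ) :
    (Subtype.val '' S ∩ Ak k).Subsingleton := by
  rintro _ ⟨⟨p, hp, rfl⟩, hpk⟩ _ ⟨⟨q, hq, rfl⟩, hqk⟩
  obtain ⟨n, hpn⟩ := mem_iUnion.1 (hSF hp)
  obtain ⟨n', hqn⟩ := mem_iUnion.1 (hSF hq)
  have hnk := eq_of_mem_Ak_of_mem_Ak (hF n hpn) hpk
  have hn'k := eq_of_mem_Ak_of_mem_Ak (hF n' hqn) hqk
  obtain rfl : n = n' := by omega
  rw [hsel n ⟨hp, hpn⟩ ⟨hq, hqn⟩]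

def leftHalf : Cant → Bool := fun γ => !γ 0

theorem leftHalf_mem_Ak : leftHalf ∈ Ak 1 :=
  mem_Ak_succ_of (fun δ δ' h => by simp [leftHalf, h 0 le_rfl]) ⟨fun _ => false, rfl⟩
    fun δ δ' _ hδ hδ' => by simp_all [leftHalf]

theorem setOf_bit_eq_mem_Ak_succ {N : ℕ} (hN : 1 ≤ N) (ch : (Fin N → Bool) → Bool) :
    (fun δ : Cant => decide (δ 0 = false ∧ δ N = ch fun i => δ i)) ∈ Ak (N + 1) := by
  let ζ : Cant := Function.update (fun _ => false) N (ch fun _ => false)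
  refine mem_Ak_succ_of (fun δ δ' h => ?_) ⟨ζ, ?_⟩ fun δ δ' h hδ hδ' => ?_
  · have h' : (fun i : Fin N => δ i) = fun i : Fin N => δ' i := funext fun i => h i i.isLt.le
    simp only [h 0 (by omega), h N le_rfl, h']
  · have h' : (fun i : Fin N => ζ i) = fun _ => false :=
      funext fun i => Function.update_of_ne i.isLt.ne _ _
    simp [ζ, h', Function.update_of_ne (show 0 ≠ N by omega)]
  · have h' : (fun i : Fin N => δ i) = fun i : Fin N => δ' i := funext fun i => h i i.isLt
    simp only [decide_eq_true_eq] at hδ hδ'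
    rw [hδ.2, hδ'.2, h']

theorem exists_mem_Ak_eqOn_leftHalf (I : Finset Cant) :
    ∃ N ≥ 1, ∃ g ∈ Ak (N + 1), ∀ γ ∈ I, g γ = leftHalf γ := by
  classical
  obtain ⟨N, hN, hsep⟩ :=
    ((eventually_ge_atTop 1).and (eventually_forall_eq_of_forall_lt_eq I)).exists
  let ch : (Fin N → Bool) → Bool := fun v =>
    decide (∃ γ ∈ I, (∀ i : Fin N, γ i = v i) ∧ γ N = true)
  have hch : ∀ γ ∈ I, ch (fun i => γ i) = γ N := fun γ hγ => by
    rw [Bool.eq_iff_iff, decide_eq_true_iff]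
    refine ⟨fun ⟨γ', hγ', hagree, h⟩ => ?_, fun h => ⟨γ, hγ, fun _ => rfl, h⟩⟩
    rwa [← hsep γ' hγ' γ hγ fun i hi => hagree ⟨i, hi⟩]
  refine ⟨N, hN, _, setOf_bit_eq_mem_Ak_succ hN ch, fun γ hγ => ?_⟩
  simp [hch γ hγ, leftHalf]

theorem leftHalf_mem_closure : leftHalf ∈ closure (⋃ n, Ak (n + 1) \ {leftHalf}) := by
  refine mem_closure_of_forall_finset fun I => ?_
  obtain ⟨N, hN, g, hg, hgI⟩ := exists_mem_Ak_eqOn_leftHalf I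
  refine ⟨g, mem_iUnion.2 ⟨N, hg, fun h => ?_⟩, hgI⟩
  have := eq_of_mem_Ak_of_mem_Ak hg (h ▸ leftHalf_mem_Ak)
  omega

/-- any S ⊆ X meeting each A_k in at most one point is closed in X;
consequently X is not a q⁺ space. -/
theorem statement17 :
    (∀ S : Set (Cant → Bool), S ⊆ Xad → (∀ k : ℕ, (S ∩ Ak k).Subsingleton) →
      IsClosed {p : ↥Xad | (p : Cant → Bool) ∈ S}) ∧
    ¬ (∀ x : ↥Xad, ∀ F : ℕ → Set ↥Xad, (∀ n, (F n).Finite) →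
        x ∈ closure (⋃ n, F n) →
        ∃ S : Set ↥Xad, S ⊆ ⋃ n, F n ∧ x ∈ closure S ∧
          ∀ n, (S ∩ F n).Subsingleton) := by
  refine ⟨fun S hSX hS => isClosed_selector hSX hS, fun H => ?_⟩
  let x : Xad := ⟨leftHalf, mem_iUnion.2 ⟨0, leftHalf_mem_Ak⟩⟩
  let F : ℕ → Set Xad := fun n => Subtype.val ⁻¹' (Ak (n + 1) \ {leftHalf})
  have hF : ∀ n, (F n).Finite := fun n =>
    ((Ak_finite _).subset sdiff_subset).preimage Subtype.val_injective.injOn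
  have hx : x ∈ closure (⋃ n, F n) := by
    refine closure_subtype.2 (closure_mono ?_ leftHalf_mem_closure)
    rintro g ⟨_, ⟨n, rfl⟩, hg⟩
    exact ⟨⟨g, mem_iUnion.2 ⟨n, hg.1⟩⟩, mem_iUnion.2 ⟨n, hg⟩, rfl⟩
  obtain ⟨S, hSF, hxS, hsel⟩ := H x F hF hx
  have hclosed := isClosed_selector (image_subset_iff.2 fun p _ => p.2)
    (subsingleton_image_inter_Ak (fun n => preimage_mono sdiff_subset) hSF hsel)
  obtain ⟨p, hp, hpx⟩ := hclosed.closure_subset_iff.2 (fun p hp => mem_image_of_mem _ hp) hxS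
  obtain ⟨n, -, hpx'⟩ := mem_iUnion.1 (hSF hp)
  exact hpx' hpx
end
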